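/- Assume (A0'), (A1). Then for all strategies φ, φ̄ ∈ Φ, the matrix (𝔸 − 𝔹)(φ,φ̄) := 𝔸(φ,φ̄) − 𝔹(φ) is a WCDD L0-matrix; in particular it is a WDD nonsingular M-matrix. -/

import Mathlib

open Matrix Finset Filter Topology

noncomputable section

section MatrixDefs

variable {n : Type*} [Fintype n] [DecidableEq n]

/-- A Z-matrix: nonpositive off-diagonal entries. -/
def IsZMatrix (A : Matrix n n ℝ) : Prop := ∀ i j, i ≠ j → A i j ≤ 0

/-- An L0-matrix: a Z-matrix with nonnegative diagonal entries. -/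
def IsL0Matrix (A : Matrix n n ℝ) : Prop := IsZMatrix A ∧ ∀ i, 0 ≤ A i i

/-- Row `i` of `A` is strictly diagonally dominant. -/
def SDDRow (A : Matrix n n ℝ) (i : n) : Prop :=
  ∑ j ∈ Finset.univ.erase i, |A i j| < |A i i|

/-- Row `i` of `A` is weakly diagonally dominant. -/
def WDDRow (A : Matrix n n ℝ) (i : n) : Prop :=
  ∑ j ∈ Finset.univ.erase i, |A i j| ≤ |A i i|

def IsWDD (A : Matrix n n ℝ) : Prop := ∀ i, WDDRow A i

def IsSDD (A : Matrix n n ℝ) : Prop := ∀ i, SDDRow A i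

/-- A (nonempty) walk in the directed graph of `A` (edge `a → b` iff `A a b ≠ 0`). -/
def MWalk (A : Matrix n n ℝ) (i j : n) : Prop :=
  Relation.TransGen (fun a b => A a b ≠ 0) i j

/-- Weakly chained diagonally dominant matrix. -/
def IsWCDD (A : Matrix n n ℝ) : Prop :=
  IsWDD A ∧ ∀ i, ¬ SDDRow A i → ∃ j, SDDRow A j ∧ MWalk A i j

/-- Substochastic matrix: nonnegative entries and row sums at most one. -/
def IsSubstochastic (A : Matrix n n ℝ) : Prop :=
  (∀ i j, 0 ≤ A i j) ∧ ∀ i, ∑ j, A i j ≤ 1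

end MatrixDefs

/-- The data of a (discretized) symmetric nonzero-sum impulse game on the symmetric grid
`x (-N) < … < x 0 = 0 < … < x N`, indexed here by `Fin (2*N+1)` (so that index `N`
corresponds to the grid point `0`, and `Fin.rev` is the reflection `x ↦ -x`). -/
structure GameSetup (N : ℕ) where
  x : Fin (2*N+1) → ℝ
  hx_mono : StrictMono x
  hx_sym : ∀ i, x i.rev = -(x i)
  Z : Fin (2*N+1) → Finset ℝ
  hZ_ne : ∀ i, (Z i).Nonempty
  hZ_nonneg : ∀ i, ∀ d ∈ Z i, 0 ≤ d
  hZ_zero : ∀ i, 0 ≤ x i → Z i = {0}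
  B : (Fin (2*N+1) → ℝ) → Matrix (Fin (2*N+1)) (Fin (2*N+1)) ℝ
  c : (Fin (2*N+1) → ℝ) → Fin (2*N+1) → ℝ
  g : (Fin (2*N+1) → ℝ) → Fin (2*N+1) → ℝ
  hB_rd : ∀ δ δ' i, δ i = δ' i → B δ i = B δ' i
  hc_rd : ∀ δ δ' i, δ i = δ' i → c δ i = c δ' i
  hg_rd : ∀ δ δ' i, δ i = δ' i → g δ i = g δ' i
  hc_pos : ∀ δ, (∀ i, δ i ∈ Z i) → ∀ i, 0 < c δ i
  L : Matrix (Fin (2*N+1)) (Fin (2*N+1)) ℝ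
  f : Fin (2*N+1) → ℝ

variable {N : ℕ}

/-- The symmetry (permutation) matrix `S v (x) = v (-x)`. -/
def Smat (N : ℕ) : Matrix (Fin (2*N+1)) (Fin (2*N+1)) ℝ :=
  Matrix.of fun i j => if j = i.rev then (1:ℝ) else 0

namespace GameSetup

variable (s : GameSetup N)

/-- Admissible impulse functions: `δ i ∈ Z i` for all grid points. -/
def Adm (δ : Fin (2*N+1) → ℝ) : Prop := ∀ i, δ i ∈ s.Z i

/-- The discrete loss operator `M v = max_{δ ∈ Z} (B δ v - c δ)` (entrywise, using
row-decoupledness to maximize row by row). -/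
def M (v : Fin (2*N+1) → ℝ) (i : Fin (2*N+1)) : ℝ :=
  (s.Z i).sup' (s.hZ_ne i) fun d => (s.B fun _ => d).mulVec v i - s.c (fun _ => d) i

/-- `δstar v i`: the largest impulse in `Z i` attaining the maximum defining `M v i`. -/
def δstar (v : Fin (2*N+1) → ℝ) (i : Fin (2*N+1)) : ℝ :=
  WithBot.unbotD 0 ((s.Z i).filter fun d =>
    (s.B fun _ => d).mulVec v i - s.c (fun _ => d) i = s.M v i).max

/-- The discrete gain operator `H v = S B(δ*(v)) S v + g (S δ*(v))`. -/
def H (v : Fin (2*N+1) → ℝ) : Fin (2*N+1) → ℝ :=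
  (Smat N * s.B (s.δstar v) * Smat N).mulVec v + s.g (s.δstar v ∘ Fin.rev)

/-- A (discrete) strategy: an intervention region `I ⊆ G_{<0}` and an admissible
impulse function. -/
structure Strategy where
  I : Finset (Fin (2*N+1))
  δ : Fin (2*N+1) → ℝ
  hI : ∀ i ∈ I, s.x i < 0
  hδ : ∀ i, δ i ∈ s.Z i

/-- The diagonal indicator matrix of the intervention region of a strategy. -/
def Psi (φ : s.Strategy) : Matrix (Fin (2*N+1)) (Fin (2*N+1)) ℝ :=
  Matrix.diagonal fun i => if i ∈ φ.I then (1:ℝ) else 0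

/-- `𝔸(φ,φ̄) = Id − (Id − Ψ̄ − SΨS)(Id + L) − Ψ̄ B(δ̄)`. -/
def Amat (φ φ' : s.Strategy) : Matrix (Fin (2*N+1)) (Fin (2*N+1)) ℝ :=
  1 - (1 - s.Psi φ' - Smat N * s.Psi φ * Smat N) * (1 + s.L) - s.Psi φ' * s.B φ'.δ

/-- `𝔹(φ) = S Ψ B(δ) S`. -/
def Bmat (φ : s.Strategy) : Matrix (Fin (2*N+1)) (Fin (2*N+1)) ℝ :=
  Smat N * s.Psi φ * s.B φ.δ * Smat N

/-- `ℂ(φ,φ̄) = (Id − Ψ̄ − SΨS) f − Ψ̄ c(δ̄) + SΨS g(Sδ)`. -/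
def Cvec (φ φ' : s.Strategy) : Fin (2*N+1) → ℝ :=
  (1 - s.Psi φ' - Smat N * s.Psi φ * Smat N).mulVec s.f - (s.Psi φ').mulVec (s.c φ'.δ)
    + (Smat N * s.Psi φ * Smat N).mulVec (s.g (φ.δ ∘ Fin.rev))

/-- Assumption (A0). -/
def A0 : Prop := ∀ φ : s.Strategy, ∀ i ∈ φ.I, ∃ j, j ∉ φ.I ∧ MWalk (s.B φ.δ) i j

/-- Assumption (A1). -/
def A1 : Prop :=
  (IsSDD (-s.L) ∧ IsL0Matrix (-s.L)) ∧
    ∀ δ, s.Adm δ → IsWDD (1 - s.B δ) ∧ IsL0Matrix (1 - s.B δ)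

/-- Assumption (A2). -/
def A2 : Prop := ∀ δ, s.Adm δ → ∀ i, 0 ≤ s.B δ i i

/-- Assumption (A0'). -/
def A0' : Prop :=
  ∀ φ φ' : s.Strategy, ∀ i, (i ∈ φ'.I ∨ i.rev ∈ φ.I) →
    ∃ j, ¬(j ∈ φ'.I ∨ j.rev ∈ φ.I) ∧
      MWalk (s.Psi φ' * s.B φ'.δ + Smat N * s.Psi φ * s.B φ.δ * Smat N) i j

/-- Identity-row condition: zero impulse gives the corresponding identity row. -/
def IdRow : Prop :=
  ∀ δ, s.Adm δ → ∀ i, δ i = 0 →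
    s.B δ i = (1 : Matrix (Fin (2*N+1)) (Fin (2*N+1)) ℝ) i

/-- The discrete QVI system: `Mv − v ≤ 0` on `G`, `Hv − v = 0` on `−I*(v)`, and
`max{Lv + f, Mv − v} = 0` on `−C*(v)`. -/
def SolvesQVI (v : Fin (2*N+1) → ℝ) : Prop :=
  (∀ i, s.M v i - v i ≤ 0) ∧
  (∀ i, s.M v i.rev - v i.rev = 0 → s.H v i - v i = 0) ∧
  (∀ i, s.M v i.rev - v i.rev < 0 →
    max (s.L.mulVec v i + s.f i) (s.M v i - v i) = 0)

/-- The intervention region induced by a payoff `v`. -/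
def indI (v : Fin (2*N+1) → ℝ) : Finset (Fin (2*N+1)) :=
  Finset.univ.filter fun i => s.x i < 0 ∧ s.L.mulVec v i + s.f i ≤ s.M v i - v i

/-- `φ` is the strategy induced by the payoff `v`. -/
def IsInduced (v : Fin (2*N+1) → ℝ) (φ : s.Strategy) : Prop :=
  φ.I = s.indI v ∧ φ.δ = s.δstar v

/-- An algorithm sequence: payoffs `v^k` with induced strategies `φ^k` satisfying the
fixed-point recurrence `𝔸(φ^k,φ^{k+1}) v^{k+1} = 𝔹(φ^k) v^k + ℂ(φ^k,φ^{k+1})`. -/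
def IsAlgSeq (v : ℕ → Fin (2*N+1) → ℝ) (φ : ℕ → s.Strategy) : Prop :=
  (∀ k, s.IsInduced (v k) (φ k)) ∧
  ∀ k, (s.Amat (φ k) (φ (k+1))).mulVec (v (k+1)) =
    (s.Bmat (φ k)).mulVec (v k) + s.Cvec (φ k) (φ (k+1))

/-- The discrete unique impulse property. -/
def UIP (v : Fin (2*N+1) → ℝ) : Prop :=
  ∀ i, s.M v i = v i →
    ∃! d, d ∈ s.Z i ∧ (s.B fun _ => d).mulVec v i - s.c (fun _ => d) i = s.M v i

end GameSetup

/-- The spectral radius of a real matrix (computed over `ℂ`). -/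
def specRad {n : Type*} [Fintype n] [DecidableEq n] (A : Matrix n n ℝ) : ℝ :=
  sSup ((fun z : ℂ => ‖z‖) '' spectrum ℂ (A.map fun r => (r : ℂ)))

/-- A nonsingular M-matrix: `A = t • Id − B` with `B ≥ 0` entrywise and `ρ(B) < t`. -/
def IsNonsingMMatrix {n : Type*} [Fintype n] [DecidableEq n] (A : Matrix n n ℝ) : Prop :=
  ∃ (t : ℝ) (Bm : Matrix n n ℝ), (∀ i j, 0 ≤ Bm i j) ∧ specRad Bm < t ∧
    A = t • (1 : Matrix n n ℝ) - Bm

section AuxWCDD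

notation "cabs" => (norm : ℂ → ℝ)

variable {n : Type*} [Fintype n] [DecidableEq n]


theorem transGen_of_ne {α : Type*} {r : α → α → Prop} {i j : α}
    (h : Relation.TransGen r i j) (hij : i ≠ j) :
    Relation.TransGen (fun a b => a ≠ b ∧ r a b) i j := by
  induction h with
  | single h => exact .single ⟨hij, h⟩
  | @tail b c hab hbc ih =>
    by_cases hbceq : b = c
    · exact hbceq ▸ ih (hbceq ▸ hij)
    · by_cases hib : i = b
      · exact .single ⟨hij, hib ▸ hbc⟩
      · exact (ih hib).tail ⟨hbceq, hbc⟩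

theorem wcdd_complex_det_ne_zero (A : Matrix n n ℂ)
    (hWDD : ∀ i, ∑ j ∈ Finset.univ.erase i, cabs (A i j) ≤ cabs (A i i))
    (hchain : ∀ i, ¬ (∑ j ∈ Finset.univ.erase i, cabs (A i j) < cabs (A i i)) →
      ∃ j, (∑ k ∈ Finset.univ.erase j, cabs (A j k) < cabs (A j j)) ∧
        Relation.TransGen (fun a b => A a b ≠ 0) i j) :
    A.det ≠ 0 := by
  intro hdet
  obtain ⟨v, hv0, hv⟩ := (Matrix.exists_mulVec_eq_zero_iff).2 hdet
  have hne : (Finset.univ : Finset n).Nonempty := by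
    obtain ⟨i, hi⟩ := Function.ne_iff.1 hv0
    exact ⟨i, mem_univ i⟩
  set m : ℝ := Finset.univ.sup' hne (fun i => cabs (v i)) with hm
  have hle : ∀ i, cabs (v i) ≤ m := fun i =>
    Finset.le_sup' (fun i => cabs (v i)) (mem_univ i)
  have hmpos : 0 < m := by
    obtain ⟨i, hi⟩ := Function.ne_iff.1 hv0
    calc (0:ℝ) < cabs (v i) := by simpa using hi
    _ ≤ m := hle i
  -- key row property at maximizers
  have P : ∀ i, cabs (v i) = m →
      (cabs (A i i) ≤ ∑ j ∈ Finset.univ.erase i, cabs (A i j)) ∧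
      ∀ j ∈ Finset.univ.erase i, A i j ≠ 0 → cabs (v j) = m := by
    intro i him
    have hrow : A i i * v i + ∑ j ∈ Finset.univ.erase i, A i j * v j = 0 := by
      rw [Finset.add_sum_erase _ (fun j => A i j * v j) (mem_univ i)]
      have := congrFun hv i
      simpa [Matrix.mulVec, dotProduct] using this
    have h1 : cabs (A i i) * m ≤ ∑ j ∈ Finset.univ.erase i, cabs (A i j) * cabs (v j) := by
      have : A i i * v i = -∑ j ∈ Finset.univ.erase i, A i j * v j := by linear_combination hrow
      calc cabs (A i i) * m = cabs (A i i * v i) := by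
            rw [norm_mul, him]
        _ = cabs (∑ j ∈ Finset.univ.erase i, A i j * v j) := by
            rw [this, norm_neg]
        _ ≤ ∑ j ∈ Finset.univ.erase i, cabs (A i j * v j) :=
            norm_sum_le _ _
        _ = _ := by simp [norm_mul]
    have h2 : ∑ j ∈ Finset.univ.erase i, cabs (A i j) * cabs (v j)
        ≤ ∑ j ∈ Finset.univ.erase i, cabs (A i j) * m := by
      refine Finset.sum_le_sum fun j _ => ?_
      exact mul_le_mul_of_nonneg_left (hle j) (norm_nonneg _)
    have h3 : ∑ j ∈ Finset.univ.erase i, cabs (A i j) * m ≤ cabs (A i i) * m := by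
      rw [← Finset.sum_mul]
      exact mul_le_mul_of_nonneg_right (hWDD i) hmpos.le
    constructor
    · have : cabs (A i i) * m ≤ (∑ j ∈ Finset.univ.erase i, cabs (A i j)) * m := by
        rw [Finset.sum_mul]; exact h1.trans h2
      exact le_of_mul_le_mul_right this hmpos
    · have heq : ∑ j ∈ Finset.univ.erase i, cabs (A i j) * (m - cabs (v j)) = 0 := by
        have : ∑ j ∈ Finset.univ.erase i, cabs (A i j) * cabs (v j)
            = ∑ j ∈ Finset.univ.erase i, cabs (A i j) * m :=
          le_antisymm h2 (by linarith [h1.trans h2, h3, h1])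
        simp [mul_sub, Finset.sum_sub_distrib, this]
      have hz := (Finset.sum_eq_zero_iff_of_nonneg (fun j _ =>
        mul_nonneg (norm_nonneg _) (by linarith [hle j]))).1 heq
      intro j hj hAij
      have := hz j hj
      rcases mul_eq_zero.1 this with h | h
      · exact absurd (norm_eq_zero.1 h) hAij
      · linarith [hle j]
  obtain ⟨imax, _, himax⟩ := Finset.exists_mem_eq_sup' hne (fun i => cabs (v i))
  have himax' : cabs (v imax) = m := himax.symm
  obtain ⟨j, hjSDD, hwalk⟩ := hchain imax (not_lt.2 (P imax himax').1)
  have hprop : ∀ a b, Relation.TransGen (fun a b => A a b ≠ 0) a b →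
      cabs (v a) = m → cabs (v b) = m := by
    intro a b hab hma
    induction hab with
    | @single c h =>
      by_cases hc : c = a
      · exact hc ▸ hma
      · exact (P a hma).2 c (Finset.mem_erase.2 ⟨hc, mem_univ c⟩) h
    | @tail b c hab hbc ih =>
      by_cases hb' : c = b
      · exact hb' ▸ ih
      · exact (P b ih).2 c (Finset.mem_erase.2 ⟨hb', mem_univ c⟩) hbc
  have hj : cabs (v j) = m := hprop imax j hwalk himax'
  exact absurd hjSDD (not_lt.2 (P j hj).1)


theorem wcdd_L0_isNonsingMMatrix [Nonempty n] (A : Matrix n n ℝ)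
    (hW : IsWCDD A) (hL0 : IsL0Matrix A) : IsNonsingMMatrix A := by
  have hne : (Finset.univ : Finset n).Nonempty := Finset.univ_nonempty
  set t : ℝ := 1 + Finset.univ.sup' hne (fun i => A i i) with ht
  have htA : ∀ i, A i i + 1 ≤ t := fun i => by
    have : A i i ≤ Finset.univ.sup' hne (fun i => A i i) :=
      Finset.le_sup' (fun i => A i i) (Finset.mem_univ i)
    simp only [ht]; linarith
  have ht1 : 1 ≤ t := by
    obtain ⟨i⟩ := ‹Nonempty n›
    have := hL0.2 i
    linarith [htA i]
  refine ⟨t, t • (1 : Matrix n n ℝ) - A, ?_, ?_, (sub_sub_cancel _ _).symm⟩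
  · intro i j
    by_cases hij : i = j
    · subst hij
      simp only [Matrix.sub_apply, Matrix.smul_apply, Matrix.one_apply_eq, smul_eq_mul, mul_one]
      linarith [htA i]
    · simp only [Matrix.sub_apply, Matrix.smul_apply, Matrix.one_apply_ne hij, smul_eq_mul,
        mul_zero, zero_sub, neg_nonneg]
      exact hL0.1 i j hij
  · -- spectral radius bound
    set Bm := t • (1 : Matrix n n ℝ) - A with hBm
    have key : ∀ z ∈ spectrum ℂ (Bm.map fun r => (r : ℂ)), cabs z < t := by
      intro z hz
      by_contra hzt
      push_neg at hzt
      apply spectrum.notMem_iff.2 ?_ hz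
      rw [Algebra.algebraMap_eq_smul_one, Matrix.isUnit_iff_isUnit_det, isUnit_iff_ne_zero]
      set M := z • (1 : Matrix n n ℂ) - Bm.map (fun r => (r : ℂ)) with hM
      have hMentry : ∀ i j, M i j = (if i = j then (z - t) else 0) + (A i j : ℂ) := by
        intro i j
        simp only [hM, hBm, Matrix.sub_apply, Matrix.smul_apply, Matrix.map_apply,
          Matrix.one_apply, smul_eq_mul]
        by_cases hij : i = j <;> simp [hij] <;> push_cast <;> ring
      have hMoff : ∀ i j, i ≠ j → M i j = (A i j : ℂ) := by
        intro i j hij; rw [hMentry, if_neg hij, zero_add]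
      have hdiag : ∀ i, A i i ≤ cabs (M i i) := by
        intro i
        have h1 : M i i = z - ((t - A i i : ℝ) : ℂ) := by
          rw [hMentry, if_pos rfl]; push_cast; ring
        have h2 : cabs z - cabs ((t - A i i : ℝ) : ℂ)
            ≤ cabs (z - ((t - A i i : ℝ) : ℂ)) := norm_sub_norm_le _ _
        rw [h1]
        have h3 : cabs ((t - A i i : ℝ) : ℂ) = t - A i i := by
          rw [Complex.norm_real, Real.norm_eq_abs, abs_of_nonneg (by linarith [htA i])]
        linarith
      have hsum : ∀ i, ∑ j ∈ Finset.univ.erase i, cabs (M i j)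
          = ∑ j ∈ Finset.univ.erase i, |A i j| := by
        intro i
        refine Finset.sum_congr rfl fun j hj => ?_
        rw [hMoff i j fun h => (Finset.ne_of_mem_erase hj) h.symm, Complex.norm_real, Real.norm_eq_abs]
      have hAbs : ∀ i, |A i i| = A i i := fun i => abs_of_nonneg (hL0.2 i)
      apply wcdd_complex_det_ne_zero
      · intro i
        rw [hsum i]
        calc ∑ j ∈ Finset.univ.erase i, |A i j| ≤ |A i i| := hW.1 i
          _ = A i i := hAbs i
          _ ≤ cabs (M i i) := hdiag i
      · intro i hi
        have hiA : ¬ SDDRow A i := by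
          intro hsdd
          apply hi
          rw [hsum i]
          calc ∑ j ∈ Finset.univ.erase i, |A i j| < |A i i| := hsdd
            _ = A i i := hAbs i
            _ ≤ cabs (M i i) := hdiag i
        obtain ⟨j, hjSDD, hwalk⟩ := hW.2 i hiA
        refine ⟨j, ?_, ?_⟩
        · rw [hsum j]
          calc ∑ k ∈ Finset.univ.erase j, |A j k| < |A j j| := hjSDD
            _ = A j j := hAbs j
            _ ≤ cabs (M j j) := hdiag j
        · refine Relation.TransGen.mono ?_ _ _ hwalk
          intro a b hab
          by_cases hab' : a = b
          · subst hab'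
            intro h0
            have : cabs (M a a) ≤ 0 := by
              rw [h0]; simp
            have hA : A a a = 0 := le_antisymm (by linarith [hdiag a]) (hL0.2 a)
            exact hab (by exact_mod_cast hA)
          · rw [hMoff a b hab']
            exact_mod_cast hab
    have hfin : ((fun z => cabs z) '' spectrum ℂ (Bm.map fun r => (r : ℂ))).Finite :=
      (Matrix.finite_spectrum _).image _
    rcases Set.eq_empty_or_nonempty
        ((fun z => cabs z) '' spectrum ℂ (Bm.map fun r => (r : ℂ))) with hemp | hnemp
    · rw [specRad, hemp, Real.sSup_empty]; linarith
    · obtain ⟨z, hz, hzeq⟩ := hnemp.csSup_mem hfin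
      rw [specRad, ← hzeq]
      exact key z hz

end AuxWCDD

section MainAux

variable {N : ℕ}

lemma Smat_mul_apply (M : Matrix (Fin (2*N+1)) (Fin (2*N+1)) ℝ) (i j : Fin (2*N+1)) :
    (Smat N * M) i j = M i.rev j := by
  simp [Matrix.mul_apply, Smat, ite_mul, one_mul, zero_mul, Finset.sum_ite_eq']

lemma mul_Smat_apply (M : Matrix (Fin (2*N+1)) (Fin (2*N+1)) ℝ) (i j : Fin (2*N+1)) :
    (M * Smat N) i j = M i j.rev := by
  have hc : ∀ k : Fin (2*N+1), (j = k.rev) = (k = j.rev) := by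
    intro k
    apply propext
    constructor
    · intro h; rw [h, Fin.rev_rev]
    · intro h; rw [h, Fin.rev_rev]
  simp only [Matrix.mul_apply, Smat, Matrix.of_apply, hc, mul_ite, mul_one, mul_zero,
    Finset.sum_ite_eq', Finset.mem_univ, if_true]

lemma sum_erase_rev (f : Fin (2*N+1) → ℝ) (i : Fin (2*N+1)) :
    ∑ j ∈ Finset.univ.erase i, f j.rev = ∑ j ∈ Finset.univ.erase i.rev, f j := by
  refine Finset.sum_nbij' (fun j => j.rev) (fun j => j.rev) ?_ ?_ ?_ ?_ ?_
  · intro a ha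
    refine Finset.mem_erase.2 ⟨fun h => ?_, Finset.mem_univ _⟩
    exact (Finset.mem_erase.1 ha).1 (Fin.rev_inj.1 h)
  · intro a ha
    refine Finset.mem_erase.2 ⟨fun h => ?_, Finset.mem_univ _⟩
    exact (Finset.mem_erase.1 ha).1 (by simpa using congrArg Fin.rev h)
  · intro a _; exact Fin.rev_rev a
  · intro a _; exact Fin.rev_rev a
  · intro a _; rfl

end MainAux

/-- Under (A0') and (A1), for all strategies `φ, φ̄ ∈ Φ` the matrix
`(𝔸 − 𝔹)(φ,φ̄)` is a WCDD L0-matrix; in particular it is a WDD nonsingular M-matrix. -/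
theorem statement11 (hN : 1 ≤ N) (s : GameSetup N) (hA0' : s.A0') (hA1 : s.A1) :
    ∀ φ φ' : s.Strategy,
      (IsWCDD (s.Amat φ φ' - s.Bmat φ) ∧ IsL0Matrix (s.Amat φ φ' - s.Bmat φ)) ∧
      (IsWDD (s.Amat φ φ' - s.Bmat φ) ∧ IsNonsingMMatrix (s.Amat φ φ' - s.Bmat φ)) := by
  intro φ φ'
  haveI : Nonempty (Fin (2*N+1)) := ⟨⟨0, by omega⟩⟩
  set D := s.Amat φ φ' - s.Bmat φ with hDdef
  obtain ⟨⟨hLSDD, hLL0⟩, hA1B⟩ := hA1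
  have hB' := hA1B φ'.δ φ'.hδ
  have hBp := hA1B φ.δ φ.hδ
  -- mutual exclusivity of the two intervention indicators
  have hexc : ∀ i : Fin (2*N+1), i ∈ φ'.I → i.rev ∈ φ.I → False := by
    intro i h1 h2
    have ha := φ'.hI i h1
    have hb := φ.hI i.rev h2
    rw [s.hx_sym i] at hb
    linarith
  -- entry formula for D
  have hSPSB : ∀ (Q : Matrix (Fin (2*N+1)) (Fin (2*N+1)) ℝ) (ψ : Fin (2*N+1) → ℝ) (a b),
      (Smat N * Matrix.diagonal ψ * Q * Smat N) a b = ψ a.rev * Q a.rev b.rev := by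
    intro Q ψ a b
    rw [mul_Smat_apply, mul_assoc, Smat_mul_apply, Matrix.diagonal_mul]
  have hSPS : ∀ a b, (Smat N * s.Psi φ * Smat N) a b
      = if a = b then (if a.rev ∈ φ.I then (1:ℝ) else 0) else 0 := by
    intro a b
    rw [mul_assoc, Smat_mul_apply, mul_Smat_apply]
    unfold GameSetup.Psi
    rw [Matrix.diagonal_apply]
    by_cases hab : a = b
    · simp [hab]
    · rw [if_neg (fun h => hab (Fin.rev_inj.1 h)),
        if_neg hab]
  have hD : ∀ i j, D i j =
      if i ∈ φ'.I then (1 - s.B φ'.δ) i j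
      else if i.rev ∈ φ.I then (1 - s.B φ.δ) i.rev j.rev
      else (-s.L) i j := by
    intro i j
    have hSB : ∀ a b, (Smat N * s.Psi φ * s.B φ.δ * Smat N) a b
        = (if a.rev ∈ φ.I then (1:ℝ) else 0) * s.B φ.δ a.rev b.rev := fun a b =>
      hSPSB (s.B φ.δ) _ a b
    have hdiagmul : ∀ j', ((1 - s.Psi φ' - Smat N * s.Psi φ * Smat N) * (1 + s.L)) i j'
        = (1 - (if i ∈ φ'.I then (1:ℝ) else 0) - (if i.rev ∈ φ.I then (1:ℝ) else 0))
          * ((1 + s.L) i j') := by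
      intro j'
      rw [Matrix.mul_apply]
      rw [Finset.sum_eq_single i]
      · congr 1
        rw [Matrix.sub_apply, Matrix.sub_apply, hSPS i i, if_pos rfl, Matrix.one_apply_eq]
        unfold GameSetup.Psi
        rw [Matrix.diagonal_apply_eq]
      · intro b _ hb
        have hz : (1 - s.Psi φ' - Smat N * s.Psi φ * Smat N) i b = 0 := by
          rw [Matrix.sub_apply, Matrix.sub_apply, hSPS i b, if_neg (Ne.symm hb),
            Matrix.one_apply_ne (Ne.symm hb)]
          unfold GameSetup.Psi
          rw [Matrix.diagonal_apply_ne _ (Ne.symm hb)]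
          ring
        rw [hz, zero_mul]
      · intro h; exact absurd (Finset.mem_univ i) h
    have hPsiB : (s.Psi φ' * s.B φ'.δ) i j
        = (if i ∈ φ'.I then (1:ℝ) else 0) * s.B φ'.δ i j := by
      unfold GameSetup.Psi
      rw [Matrix.diagonal_mul]
    have hexpand : D i j = (1 : Matrix _ _ ℝ) i j
        - (1 - (if i ∈ φ'.I then (1:ℝ) else 0) - (if i.rev ∈ φ.I then (1:ℝ) else 0))
          * ((1 + s.L) i j)
        - (if i ∈ φ'.I then (1:ℝ) else 0) * s.B φ'.δ i j
        - (if i.rev ∈ φ.I then (1:ℝ) else 0) * s.B φ.δ i.rev j.rev := by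
      simp only [hDdef, GameSetup.Amat, GameSetup.Bmat, Matrix.sub_apply]
      rw [hdiagmul j, hPsiB, hSB]
    by_cases hi : i ∈ φ'.I
    · have hir : i.rev ∉ φ.I := fun h => hexc i hi h
      rw [hexpand, if_pos hi, if_neg hir, if_pos hi]
      simp only [Matrix.sub_apply]
      ring
    · by_cases hir : i.rev ∈ φ.I
      · rw [hexpand, if_neg hi, if_pos hir, if_neg hi, if_pos hir]
        have hone : (1 : Matrix (Fin (2*N+1)) (Fin (2*N+1)) ℝ) i j
            = (1 : Matrix (Fin (2*N+1)) (Fin (2*N+1)) ℝ) i.rev j.rev := by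
          by_cases hij : i = j
          · subst hij; rw [Matrix.one_apply_eq, Matrix.one_apply_eq]
          · rw [Matrix.one_apply_ne hij, Matrix.one_apply_ne
              (fun h => hij (Fin.rev_inj.1 h))]
        rw [Matrix.sub_apply, ← hone]
        ring
      · rw [hexpand, if_neg hi, if_neg hir, if_neg hi, if_neg hir]
        simp only [Matrix.add_apply, Matrix.neg_apply]
        ring
  -- row rewriting helpers
  have hrow1 : ∀ i, i ∈ φ'.I → ∀ j, D i j = (1 - s.B φ'.δ) i j := by
    intro i hi j; rw [hD, if_pos hi]
  have hrow2 : ∀ i, i ∉ φ'.I → i.rev ∈ φ.I → ∀ j,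
      D i j = (1 - s.B φ.δ) i.rev j.rev := by
    intro i hi hir j; rw [hD, if_neg hi, if_pos hir]
  have hrow3 : ∀ i, i ∉ φ'.I → i.rev ∉ φ.I → ∀ j, D i j = (-s.L) i j := by
    intro i hi hir j; rw [hD, if_neg hi, if_neg hir]
  -- WDD
  have hWDD : IsWDD D := by
    intro i
    unfold WDDRow
    by_cases hi : i ∈ φ'.I
    · simp only [hrow1 i hi]
      exact hB'.1 i
    · by_cases hir : i.rev ∈ φ.I
      · simp only [hrow2 i hi hir]
        rw [sum_erase_rev (fun k => |(1 - s.B φ.δ) i.rev k|) i]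
        exact hBp.1 i.rev
      · simp only [hrow3 i hi hir]
        exact (hLSDD i).le
  -- L0
  have hL0 : IsL0Matrix D := by
    constructor
    · intro i j hij
      by_cases hi : i ∈ φ'.I
      · rw [hrow1 i hi j]
        exact hB'.2.1 i j hij
      · by_cases hir : i.rev ∈ φ.I
        · rw [hrow2 i hi hir j]
          exact hBp.2.1 i.rev j.rev
            (fun h => hij (Fin.rev_inj.1 h))
        · rw [hrow3 i hi hir j]
          exact hLL0.1 i j hij
    · intro i
      by_cases hi : i ∈ φ'.I
      · rw [hrow1 i hi i]; exact hB'.2.2 i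
      · by_cases hir : i.rev ∈ φ.I
        · rw [hrow2 i hi hir i]; exact hBp.2.2 i.rev
        · rw [hrow3 i hi hir i]; exact hLL0.2 i
  -- SDD at non-intervention rows
  have hSDD0 : ∀ i, i ∉ φ'.I → i.rev ∉ φ.I → SDDRow D i := by
    intro i hi hir
    unfold SDDRow
    simp only [hrow3 i hi hir]
    exact hLSDD i
  -- WCDD
  have hWCDD : IsWCDD D := by
    refine ⟨hWDD, fun i hi => ?_⟩
    have hχ : i ∈ φ'.I ∨ i.rev ∈ φ.I := by
      by_contra h
      push_neg at h
      exact hi (hSDD0 i h.1 h.2)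
    obtain ⟨j, hj, hwalk⟩ := hA0' φ φ' i hχ
    push_neg at hj
    refine ⟨j, hSDD0 j hj.1 hj.2, ?_⟩
    have hij : i ≠ j := by
      rintro rfl
      rcases hχ with h | h
      · exact hj.1 h
      · exact hj.2 h
    -- entry formula for the A0' matrix
    have hM0 : ∀ a b, (s.Psi φ' * s.B φ'.δ + Smat N * s.Psi φ * s.B φ.δ * Smat N) a b
        = (if a ∈ φ'.I then (1:ℝ) else 0) * s.B φ'.δ a b
          + (if a.rev ∈ φ.I then (1:ℝ) else 0) * s.B φ.δ a.rev b.rev := by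
      intro a b
      have hSB2 : (Smat N * s.Psi φ * s.B φ.δ * Smat N) a b
          = (if a.rev ∈ φ.I then (1:ℝ) else 0) * s.B φ.δ a.rev b.rev :=
        hSPSB (s.B φ.δ) _ a b
      rw [Matrix.add_apply, hSB2]
      congr 1
      unfold GameSetup.Psi
      rw [Matrix.diagonal_mul]
    refine Relation.TransGen.mono ?_ _ _ (transGen_of_ne hwalk hij)
    rintro a b ⟨hab, h0⟩
    rw [hM0 a b] at h0
    by_cases ha : a ∈ φ'.I
    · have har : a.rev ∉ φ.I := fun h => hexc a ha h
      rw [if_pos ha, if_neg har, one_mul, zero_mul, add_zero] at h0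
      rw [hrow1 a ha b, Matrix.sub_apply, Matrix.one_apply_ne hab]
      intro h; exact h0 (by linarith [sub_eq_zero.1 (by linarith [h] : (0:ℝ) - s.B φ'.δ a b = 0)])
    · by_cases har : a.rev ∈ φ.I
      · rw [if_neg ha, if_pos har, one_mul, zero_mul, zero_add] at h0
        rw [hrow2 a ha har b, Matrix.sub_apply, Matrix.one_apply_ne
          (fun h => hab (Fin.rev_inj.1 h))]
        intro h
        exact h0 (by linarith [h])
      · rw [if_neg ha, if_neg har, zero_mul, zero_mul, add_zero] at h0
        exact absurd rfl h0
  exact ⟨⟨hWCDD, hL0⟩, hWCDD.1, wcdd_L0_isNonsingMMatrix D hWCDD hL0⟩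

end
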